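/- arXiv:0712.3718 — 3 statements merged into one kernel-verified Lean document; each statement's English description precedes it below -/
import Mathlib

section
/- The orthogonal complement Ψ^⊥ of Ψ in Skew(4,ℝ) with respect to the form b₀(M,N) = (1/2)Tr(MΨNΨ) − (1/4)Tr(MΨ)Tr(NΨ) is a 5-dimensional subspace, and the restriction of b₀ to Ψ^⊥ is a nondegenerate quadratic form of signature (3,2). -/
/-! On skew-symmetric matrices `b0` is the polarised Pfaffian: in the coordinates of `skew4` it reads
`a f' + f a' - b e' - e b' + c d' + d c'`, a form of signature (3,3). As `b0 Psi Psi = -2`, the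
complement of `Psi` has signature (3,2), witnessed by an explicit orthogonal basis with norms
`2, 2, 2, -2, -2`. Expanding a matrix of `Psi^⊥` in this basis gives both spanning and nondegeneracy. -/

open Matrix

noncomputable def Psi : Matrix (Fin 4) (Fin 4) ℝ :=
  !![0,0,1,0; 0,0,0,1; -1,0,0,0; 0,-1,0,0]

noncomputable def b0 (M N : Matrix (Fin 4) (Fin 4) ℝ) : ℝ :=
  (1/2) * (M * Psi * N * Psi).trace - (1/4) * (M * Psi).trace * (N * Psi).trace

def skew4 (a b c d e f : ℝ) : Matrix (Fin 4) (Fin 4) ℝ :=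
  !![0, a, b, c; -a, 0, d, e; -b, -d, 0, f; -c, -e, -f, 0]

theorem skew4_transpose (a b c d e f : ℝ) : (skew4 a b c d e f)ᵀ = -skew4 a b c d e f := by
  ext i j; fin_cases i <;> fin_cases j <;> simp [skew4]

theorem eq_skew4_of_transpose_eq_neg {M : Matrix (Fin 4) (Fin 4) ℝ} (hM : Mᵀ = -M) :
    M = skew4 (M 0 1) (M 0 2) (M 0 3) (M 1 2) (M 1 3) (M 2 3) := by
  have h i j : M j i = -M i j := by simpa using congrFun₂ hM i j
  have hd i : M i i = 0 := by linarith [h i i]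
  ext i j; fin_cases i <;> fin_cases j <;> simp [skew4, hd, h 0 1, h 0 2, h 0 3, h 1 2, h 1 3, h 2 3]

theorem Psi_eq_skew4 : Psi = skew4 0 1 0 0 1 0 := by
  ext i j; fin_cases i <;> fin_cases j <;> simp [skew4, Psi]

theorem b0_skew4 (a b c d e f a' b' c' d' e' f' : ℝ) :
    b0 (skew4 a b c d e f) (skew4 a' b' c' d' e' f') =
      a * f' + f * a' - b * e' - e * b' + c * d' + d * c' := by
  simp [b0, skew4, Psi, trace, Fin.sum_univ_four]
  ring

noncomputable def b0Form : LinearMap.BilinForm ℝ (Matrix (Fin 4) (Fin 4) ℝ) :=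
  LinearMap.mk₂ ℝ b0
    (fun M M' N => by simp only [b0, Matrix.add_mul, trace_add]; ring)
    (fun c M N => by simp only [b0, Matrix.smul_mul, trace_smul, smul_eq_mul]; ring)
    (fun M N N' => by simp only [b0, Matrix.add_mul, Matrix.mul_add, trace_add]; ring)
    (fun c M N => by simp only [b0, Matrix.smul_mul, Matrix.mul_smul, trace_smul, smul_eq_mul]; ring)

@[simp]
theorem b0Form_apply (M N : Matrix (Fin 4) (Fin 4) ℝ) : b0Form M N = b0 M N := rfl

def psiPerpBasis : Fin 5 → Matrix (Fin 4) (Fin 4) ℝ :=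
  ![skew4 1 0 0 0 0 1, skew4 0 0 1 1 0 0, skew4 0 1 0 0 (-1) 0,
    skew4 1 0 0 0 0 (-1), skew4 0 0 1 (-1) 0 0]

theorem psiPerpBasis_transpose (i : Fin 5) : (psiPerpBasis i)ᵀ = -psiPerpBasis i := by
  fin_cases i <;> exact skew4_transpose ..

theorem b0_psiPerpBasis_Psi (i : Fin 5) : b0 (psiPerpBasis i) Psi = 0 := by
  fin_cases i <;> simp [psiPerpBasis, Psi_eq_skew4, b0_skew4]

theorem b0_psiPerpBasis_of_ne {i j : Fin 5} (hij : i ≠ j) :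
    b0 (psiPerpBasis i) (psiPerpBasis j) = 0 := by
  fin_cases i <;> fin_cases j <;> simp_all [psiPerpBasis, b0_skew4]

theorem b0_psiPerpBasis_self (i : Fin 5) :
    b0 (psiPerpBasis i) (psiPerpBasis i) = if (i : ℕ) < 3 then 2 else -2 := by
  fin_cases i <;> norm_num [psiPerpBasis, b0_skew4]

theorem linearIndependent_psiPerpBasis : LinearIndependent ℝ psiPerpBasis :=
  LinearMap.BilinForm.linearIndependent_of_iIsOrtho (B := b0Form)
    (fun _ _ hij => b0_psiPerpBasis_of_ne hij)
    (fun i => by rw [b0Form_apply, b0_psiPerpBasis_self]; split_ifs <;> norm_num)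

theorem eq_sum_psiPerpBasis {M : Matrix (Fin 4) (Fin 4) ℝ} (hM : Mᵀ = -M) (hΨ : b0 M Psi = 0) :
    M = ∑ i, (b0 M (psiPerpBasis i) / b0 (psiPerpBasis i) (psiPerpBasis i)) • psiPerpBasis i := by
  obtain ⟨a, b, c, d, e, f, rfl⟩ : ∃ a b c d e f, M = skew4 a b c d e f :=
    ⟨_, _, _, _, _, _, eq_skew4_of_transpose_eq_neg hM⟩
  rw [Psi_eq_skew4, b0_skew4] at hΨ
  simp only [Fin.sum_univ_five, psiPerpBasis, Matrix.cons_val, b0_skew4]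
  ext i j
  fin_cases i <;> fin_cases j <;> norm_num [skew4] <;> linarith

/-- Ψ^⊥ ⊂ Skew(4,ℝ) is 5-dimensional and b₀ restricted to it is
nondegenerate of signature (3,2): there is an orthogonal basis f₀,…,f₄ of Ψ^⊥
with b₀(fᵢ,fᵢ) > 0 for i < 3 and b₀(fᵢ,fᵢ) < 0 for i ≥ 3. -/
theorem psiPerp_dim_five_signature_three_two :
    (∀ M : Matrix (Fin 4) (Fin 4) ℝ, Mᵀ = -M → b0 M Psi = 0 →
      (∀ N : Matrix (Fin 4) (Fin 4) ℝ, Nᵀ = -N → b0 N Psi = 0 → b0 M N = 0) → M = 0) ∧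
    ∃ f : Fin 5 → Matrix (Fin 4) (Fin 4) ℝ,
      (∀ i, (f i)ᵀ = -(f i) ∧ b0 (f i) Psi = 0) ∧
      LinearIndependent ℝ f ∧
      (∀ M : Matrix (Fin 4) (Fin 4) ℝ, Mᵀ = -M → b0 M Psi = 0 →
        M ∈ Submodule.span ℝ (Set.range f)) ∧
      (∀ i j, i ≠ j → b0 (f i) (f j) = 0) ∧
      (∀ i : Fin 5, (i : ℕ) < 3 → 0 < b0 (f i) (f i)) ∧
      (∀ i : Fin 5, 3 ≤ (i : ℕ) → b0 (f i) (f i) < 0) := by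
  refine ⟨fun M hM hΨ hperp => ?_, psiPerpBasis,
    fun i => ⟨psiPerpBasis_transpose i, b0_psiPerpBasis_Psi i⟩, linearIndependent_psiPerpBasis,
    fun M hM hΨ => ?_, fun _ _ => b0_psiPerpBasis_of_ne, fun i hi => ?_, fun i hi => ?_⟩
  · rw [eq_sum_psiPerpBasis hM hΨ]
    simp [hperp _ (psiPerpBasis_transpose _) (b0_psiPerpBasis_Psi _)]
  · rw [eq_sum_psiPerpBasis hM hΨ]
    exact Submodule.sum_mem _ fun i _ => Submodule.smul_mem _ _ (Submodule.subset_span ⟨i, rfl⟩)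
  · rw [b0_psiPerpBasis_self, if_pos hi]; norm_num
  · rw [b0_psiPerpBasis_self, if_neg (by omega)]; norm_num
end

section
/- The kernel of the group homomorphism α : Sp(4,ℝ) → O(Ψ^⊥, b₀) induced by the conjugation action M ↦ gMgᵀ on Skew(4,ℝ) restricted to Ψ^⊥ is exactly {±1₄}. -/
/-!
Since `Ψ² = -1`, `b₀(M, Ψ) = Tr(MΨ)/2`, so `Ψ^⊥ ∩ Skew` consists of the skew `M` with `Tr(MΨ) = 0`.
For symplectic `g`, the equation `gMgᵀ = M` is equivalent to `g` commuting with `MΨ`, which makes the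
kernel condition linear in `g`. The products `MΨ` for four such `M` already have only scalar matrices
in their commutant, and a scalar `c • 1` is symplectic exactly when `c² = 1`.
-/

open Matrix

lemma Psi_mul_Psi : Psi * Psi = -1 := by
  ext i j; fin_cases i <;> fin_cases j <;> simp [Psi, mul_apply, Fin.sum_univ_four]

lemma b0_Psi (M : Matrix (Fin 4) (Fin 4) ℝ) : b0 M Psi = (M * Psi).trace / 2 := by
  simp only [b0, Matrix.mul_assoc, Psi_mul_Psi, mul_neg, mul_one, neg_mul, trace_neg, trace_one,
    Fintype.card_fin]
  push_cast
  ring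

lemma commute_of_conj_eq {n R : Type*} [Fintype n] [NonUnitalSemiring R]
    {J g M : Matrix n n R} (hg : gᵀ * J * g = J) (h : g * M * gᵀ = M) :
    Commute g (M * J) :=
  calc g * (M * J) = g * M * (gᵀ * J * g) := by rw [hg, Matrix.mul_assoc]
    _ = g * M * gᵀ * J * g := by simp only [Matrix.mul_assoc]
    _ = M * J * g := by rw [h]

lemma eq_smul_one_of_forall_commute (g : Matrix (Fin 4) (Fin 4) ℝ)
    (h : ∀ M : Matrix (Fin 4) (Fin 4) ℝ, Mᵀ = -M → (M * Psi).trace = 0 → Commute g (M * Psi)) :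
    g = g 0 0 • 1 := by
  have entries := fun M hskew htr => Matrix.ext_iff.mpr (h M hskew htr).eq
  have e01 := entries !![0,1,0,0; -1,0,0,0; 0,0,0,0; 0,0,0,0]
    (by ext i j; fin_cases i <;> fin_cases j <;> simp) (by simp [Psi, trace, Fin.sum_univ_four])
  have e23 := entries !![0,0,0,0; 0,0,0,0; 0,0,0,1; 0,0,-1,0]
    (by ext i j; fin_cases i <;> fin_cases j <;> simp) (by simp [Psi, trace, Fin.sum_univ_four])
  have e03 := entries !![0,0,0,1; 0,0,0,0; 0,0,0,0; -1,0,0,0]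
    (by ext i j; fin_cases i <;> fin_cases j <;> simp) (by simp [Psi, trace, Fin.sum_univ_four])
  -- here `MΨ = diag(-1, 1, -1, 1)`, which kills the entries of `g` joining indices of opposite parity
  have e02_13 := entries !![0,0,1,0; 0,0,0,-1; -1,0,0,0; 0,1,0,0]
    (by ext i j; fin_cases i <;> fin_cases j <;> simp) (by simp [Psi, trace, Fin.sum_univ_four])
  simp [Psi, mul_apply, Fin.sum_univ_four, Fin.forall_fin_succ] at e01 e23 e03 e02_13
  ext i j
  fin_cases i <;> fin_cases j <;> simp <;> grind

lemma mul_self_eq_one_of_smul_one_symplectic {c : ℝ}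
    (h : (c • 1 : Matrix (Fin 4) (Fin 4) ℝ)ᵀ * Psi * (c • 1) = Psi) : c * c = 1 := by
  simpa [Psi] using congrFun₂ h 0 2

/-- the kernel of α : Sp(4,ℝ) → O(Ψ^⊥, b₀), g acting by
M ↦ g M gᵀ on Ψ^⊥ ⊂ Skew(4,ℝ), is exactly {±1}. -/
theorem kernel_of_alpha_is_pm_one
    (g : Matrix (Fin 4) (Fin 4) ℝ) (hg : gᵀ * Psi * g = Psi) :
    (∀ M : Matrix (Fin 4) (Fin 4) ℝ, Mᵀ = -M → b0 M Psi = 0 → g * M * gᵀ = M) ↔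
      g = 1 ∨ g = -1 := by
  constructor
  · intro h
    have hscalar := eq_smul_one_of_forall_commute g fun M hskew htr =>
      commute_of_conj_eq hg (h M hskew (by rw [b0_Psi, htr, zero_div]))
    rw [hscalar] at hg ⊢
    rcases mul_self_eq_one_iff.mp (mul_self_eq_one_of_smul_one_symplectic hg) with hc | hc <;>
      simp [hc]
  · rintro (rfl | rfl) M - - <;> simp
end

section
/- For a 4×4 integral skew-symmetric matrix X with b₀(X,Ψ) = 0 (i.e., x₁₃ + x₂₄ = 0), if τ ∈ 𝔥₂ satisfies (τ,1)X(τ,1)ᵀ = 0, then b₀(X,X) > 0 or X = 0. -/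
open Matrix

/-- The Siegel upper half space of genus 2: symmetric 2×2 complex matrices
with positive definite imaginary part. -/
def InSiegel (τ : Matrix (Fin 2) (Fin 2) ℂ) : Prop :=
  τᵀ = τ ∧ (Matrix.of fun i j => (τ i j).im).PosDef

/-- The 2×2 matrix (τ,1) X (τ;1)ᵀ for a 4×4 matrix X (indices split 2+2). -/
noncomputable def humbertMatrix (τ : Matrix (Fin 2) (Fin 2) ℂ)
    (X : Matrix (Fin 4) (Fin 4) ℤ) : Matrix (Fin 2) (Fin 2) ℂ :=
  (fromCols τ 1 : Matrix (Fin 2) (Fin 2 ⊕ Fin 2) ℂ) *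
    ((X.map fun k => (k : ℂ)).submatrix (finSumFinEquiv (n := 2) (m := 2))
      (finSumFinEquiv (n := 2) (m := 2))) *
    (fromRows τ 1 : Matrix (Fin 2 ⊕ Fin 2) (Fin 2) ℂ)

lemma humbert_key (a b c d f x1 x2 x3 y1 y2 y3 : ℝ)
    (hy1 : 0 < y1) (hD : 0 < y1*y3 - y2^2)
    (hre : a*(x1*x3 - y1*y3 - x2^2 + y2^2) + c*x1 - 2*b*x2 - d*x3 + f = 0)
    (him : a*(x1*y3 + y1*x3 - 2*x2*y2) + c*y1 - 2*b*y2 - d*y3 = 0)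
    (hne : ¬(a = 0 ∧ b = 0 ∧ c = 0 ∧ d = 0 ∧ f = 0)) :
    0 < b^2 + a*f + c*d := by
  have hy3 : 0 < y3 := by nlinarith [sq_nonneg y2]
  by_cases ha : a = 0
  · subst ha
    simp only [zero_mul, zero_add] at hre him
    by_cases hb : b = 0
    · subst hb
      simp only [mul_zero, zero_mul, sub_zero, zero_add] at hre him ⊢
      by_cases hc : c = 0
      · subst hc
        simp only [zero_mul, zero_sub, zero_add, neg_eq_zero] at him hre ⊢
        have hd : d = 0 := by
          rcases mul_eq_zero.1 him with h | h
          · exact h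
          · exact absurd h (ne_of_gt hy3)
        subst hd
        have hf : f = 0 := by
          simp only [zero_mul, zero_sub, neg_zero, zero_add] at hre; linarith
        exact absurd ⟨rfl, rfl, rfl, rfl, hf⟩ hne
      · have h1 : c * y1 = d * y3 := by linarith
        have h2 : (0:ℝ) < (c*y1)^2 := by positivity
        have h3 : (c*y1)*(d*y3) = (c*y1)^2 := by rw [h1]; ring
        nlinarith [mul_pos hy1 hy3, h2, h3]
    · have hb2 : 0 < b^2 := by positivity
      have hsq : c*y1 - d*y3 = 2*b*y2 := by linarith
      have hsq2 : (c*y1 - d*y3)^2 = 4*b^2*y2^2 := by rw [hsq]; ring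
      nlinarith [sq_nonneg (c*y1 + d*y3), mul_pos hb2 hD, mul_pos hy1 hy3]
  · have ha2 : 0 < a^2 := by positivity
    set p := a*x1 - d with hp
    set q := a*x3 + c with hq
    set r := a*x2 + b with hr
    have hsum : p*y3 + q*y1 = 2*r*y2 := by
      rw [hp, hq, hr]; linear_combination him
    have hid : b^2 + a*f + c*d = a^2*(y1*y3 - y2^2) + r^2 - p*q := by
      rw [hp, hq, hr]; linear_combination a * hre
    have hrpq : p*q ≤ r^2 := by
      by_contra hcon
      push_neg at hcon
      have hsumsq : (p*y3 + q*y1)^2 = 4*r^2*y2^2 := by rw [hsum]; ring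
      nlinarith [sq_nonneg (p*y3 - q*y1), mul_nonneg (sq_nonneg r) hD.le,
        mul_pos (mul_pos hy1 hy3) (sub_pos.2 hcon)]
    nlinarith [mul_pos ha2 hD]

/-- for X ∈ Skew(4,ℤ) with x₁₃ + x₂₄ = 0, if the Humbert locus
𝔥_X = {τ ∈ 𝔥₂ : (τ,1)X(τ;1) = 0} is nonempty, then b₀(X,X) > 0 or X = 0,
where b₀(X,X) = 2x₁₃² + 2x₁₂x₃₄ + 2x₁₄x₂₃ (0-based indices). -/
theorem humbert_nonempty_implies_positive
    (X : Matrix (Fin 4) (Fin 4) ℤ) (hX : Xᵀ = -X) (hperp : X 0 2 + X 1 3 = 0)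
    (h : ∃ τ : Matrix (Fin 2) (Fin 2) ℂ, InSiegel τ ∧ humbertMatrix τ X = 0) :
    0 < 2 * (X 0 2)^2 + 2 * X 0 1 * X 2 3 + 2 * X 0 3 * X 1 2 ∨ X = 0 := by
  obtain ⟨τ, ⟨hsym, hpos⟩, hM⟩ := h
  have hs : ∀ i j, X j i = -X i j := fun i j => congrFun (congrFun hX i) j
  have h00 : X 0 0 = 0 := by have := hs 0 0; omega
  have h11 : X 1 1 = 0 := by have := hs 1 1; omega
  have h10 : X 1 0 = -X 0 1 := hs 0 1
  have h20 : X 2 0 = -X 0 2 := hs 0 2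
  have h21 : X 2 1 = -X 1 2 := hs 1 2
  have h13 : X 1 3 = -X 0 2 := by omega
  -- the scalar equation
  have e : (τ 0 0 * (X 0 0 : ℂ) + τ 0 1 * (X 1 0 : ℂ) + (X 2 0 : ℂ)) * τ 0 1 +
      (τ 0 0 * (X 0 1 : ℂ) + τ 0 1 * (X 1 1 : ℂ) + (X 2 1 : ℂ)) * τ 1 1 +
      (τ 0 0 * (X 0 3 : ℂ) + τ 0 1 * (X 1 3 : ℂ) + (X 2 3 : ℂ)) = 0 := by
    have e := congrFun (congrFun hM 0) 1
    simp only [humbertMatrix, Matrix.mul_apply, Fintype.sum_sum_type, Fin.sum_univ_two,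
      fromCols_apply_inl, fromCols_apply_inr, fromRows_apply_inl, fromRows_apply_inr, finSumFinEquiv, Matrix.submatrix_apply, Matrix.map_apply,
      Matrix.of_apply, Matrix.zero_apply, Matrix.one_apply, Fin.isValue] at e
    norm_num at e
    exact e
  rw [h00, h10, h20, h21, h13, h11] at e
  push_cast at e
  -- names
  set a : ℝ := (X 0 1 : ℝ) with hadef
  set b : ℝ := (X 0 2 : ℝ) with hbdef
  set c : ℝ := (X 0 3 : ℝ) with hcdef
  set d : ℝ := (X 1 2 : ℝ) with hddef
  set f : ℝ := (X 2 3 : ℝ) with hfdef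
  set x1 : ℝ := (τ 0 0).re
  set x2 : ℝ := (τ 0 1).re
  set x3 : ℝ := (τ 1 1).re
  set y1 : ℝ := (τ 0 0).im
  set y2 : ℝ := (τ 0 1).im
  set y3 : ℝ := (τ 1 1).im
  have hcast : ∀ (n : ℤ), ((n : ℂ).re = (n:ℝ)) ∧ ((n : ℂ).im = 0) := by
    intro n; constructor <;> simp
  rw [Complex.ext_iff] at e
  obtain ⟨hre0, him0⟩ := e
  simp only [Complex.add_re, Complex.add_im, Complex.mul_re, Complex.mul_im,
    Complex.neg_re, Complex.neg_im, Complex.intCast_re, Complex.intCast_im,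
    Complex.zero_re, Complex.zero_im] at hre0 him0
  -- posdef facts
  have hτ10 : τ 1 0 = τ 0 1 := congrFun (congrFun hsym 0) 1
  have hy1 : 0 < y1 := by
    have h5 := hpos.dotProduct_mulVec_pos (x := ![1, 0]) (by intro hcon; simpa using congrFun hcon 0)
    simpa [Matrix.mulVec, dotProduct, Fin.sum_univ_two] using h5
  have hdet := hpos.det_pos
  rw [Matrix.det_fin_two] at hdet
  have hD : 0 < y1 * y3 - y2 ^ 2 := by
    simp only [Matrix.of_apply, hτ10] at hdet
    nlinarith [hdet]
  -- apply the key lemma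
  have hre : a*(x1*x3 - y1*y3 - x2^2 + y2^2) + c*x1 - 2*b*x2 - d*x3 + f = 0 := by
    linear_combination hre0
  have him : a*(x1*y3 + y1*x3 - 2*x2*y2) + c*y1 - 2*b*y2 - d*y3 = 0 := by
    linear_combination him0
  by_cases hz : X 0 1 = 0 ∧ X 0 2 = 0 ∧ X 0 3 = 0 ∧ X 1 2 = 0 ∧ X 2 3 = 0
  · right
    obtain ⟨z1, z2, z3, z4, z5⟩ := hz
    have g22 : X 2 2 = 0 := by have := hs 2 2; omega
    have g33 : X 3 3 = 0 := by have := hs 3 3; omega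
    have g10 : X 1 0 = 0 := by rw [hs 0 1, z1, neg_zero]
    have g20 : X 2 0 = 0 := by rw [hs 0 2, z2, neg_zero]
    have g21 : X 2 1 = 0 := by rw [hs 1 2, z4, neg_zero]
    have g30 : X 3 0 = 0 := by rw [hs 0 3, z3, neg_zero]
    have g13 : X 1 3 = 0 := by rw [h13, z2, neg_zero]
    have g31 : X 3 1 = 0 := by rw [hs 1 3, g13, neg_zero]
    have g32 : X 3 2 = 0 := by rw [hs 2 3, z5, neg_zero]
    ext i j
    fin_cases i <;> fin_cases j <;> simp only [Matrix.zero_apply] <;>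
      first
        | exact h00 | exact z1 | exact z2 | exact z3
        | exact g10 | exact h11 | exact z4 | exact g13
        | exact g20 | exact g21 | exact g22 | exact z5
        | exact g30 | exact g31 | exact g32 | exact g33
  · left
    have hne : ¬(a = 0 ∧ b = 0 ∧ c = 0 ∧ d = 0 ∧ f = 0) := by
      intro ⟨w1, w2, w3, w4, w5⟩
      rw [hadef] at w1; rw [hbdef] at w2; rw [hcdef] at w3
      rw [hddef] at w4; rw [hfdef] at w5
      exact hz ⟨by exact_mod_cast w1, by exact_mod_cast w2, by exact_mod_cast w3,
        by exact_mod_cast w4, by exact_mod_cast w5⟩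
    have hk : 0 < b^2 + a*f + c*d :=
      humbert_key a b c d f x1 x2 x3 y1 y2 y3 hy1 hD hre him hne
    rw [hadef, hbdef, hcdef, hddef, hfdef] at hk
    have hk2 : (0:ℤ) < (X 0 2)^2 + X 0 1 * X 2 3 + X 0 3 * X 1 2 := by
      exact_mod_cast hk
    linarith
end
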